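/- Let w ∈ W, α ∈ Φ⁺, and let m be an integer with m ≥ 0 if wα ∈ Φ⁺ and m ≥ 1 if wα ∈ Φ⁻ (i.e., (α, m) is a valid edge label at w in DBG(W)). Then m⟨α∨, 2ρ⟩ ≥ ℓ(w) − ℓ(ws_α) + 1, and equality holds if and only if either (m = 0 and ℓ(ws_α) = ℓ(w) + 1) or (m = 1 and ℓ(ws_α) = ℓ(w) + 1 − ⟨α∨, 2ρ⟩), i.e., if and only if w →^{(α,m)} ws_α is a labelled edge of QBG(W). -/

import Mathlib

noncomputable section

open Module

variable {V : Type} [AddCommGroup V] [Module ℝ V] [DecidableEq V]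

/-- A finite crystallographic root system in `V`, together with a choice of positive roots. -/
structure RootSystemData (V : Type) [AddCommGroup V] [Module ℝ V] where
  /-- the (finite) set of roots -/
  Φ : Finset V
  /-- the set of positive roots -/
  pos : Finset V
  /-- the coroot `α∨`, viewed as a linear functional on `V` (only its values on `Φ` matter) -/
  coroot : V → Module.Dual ℝ V
  /-- the integer-valued pairing `⟨α∨, β⟩` (crystallographic condition) -/
  pairing : V → V → ℤ
  /-- the reflection `s_α` (only its values for `α ∈ Φ` matter) -/
  s : V → V ≃ₗ[ℝ] V
  span_eq : Submodule.span ℝ (Φ : Set V) = ⊤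
  ne_zero : ∀ α ∈ Φ, α ≠ (0 : V)
  neg_mem : ∀ α ∈ Φ, -α ∈ Φ
  coroot_self : ∀ α ∈ Φ, coroot α α = 2
  pairing_eq : ∀ α ∈ Φ, ∀ β ∈ Φ, (pairing α β : ℝ) = coroot α β
  s_apply : ∀ α ∈ Φ, ∀ v : V, s α v = v - coroot α v • α
  s_root_mem : ∀ α ∈ Φ, ∀ β ∈ Φ, s α β ∈ Φ
  pos_subset : pos ⊆ Φ
  mem_pos_or : ∀ α ∈ Φ, α ∈ pos ∨ -α ∈ pos
  pos_not_neg : ∀ α ∈ pos, -α ∉ pos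
  pos_add_mem : ∀ α ∈ pos, ∀ β ∈ pos, α + β ∈ Φ → α + β ∈ pos

namespace RootSystemData

variable (R : RootSystemData V)

/-- The Weyl group `W`, realized as a subgroup of the linear automorphisms of `V`,
generated by the reflections in the roots. -/
def Wgrp : Subgroup (V ≃ₗ[ℝ] V) := Subgroup.closure ((fun α => R.s α) '' (R.Φ : Set V))

/-- The length function `ℓ(w) = #{α ∈ Φ⁺ : w α ∈ Φ⁻}`. -/
def len (w : V ≃ₗ[ℝ] V) : ℕ := (R.pos.filter fun α => -(w α) ∈ R.pos).card

/-- `⟨α∨, 2ρ⟩ = Σ_{β ∈ Φ⁺} ⟨α∨, β⟩` (an integer). -/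
def pairSum (α : V) : ℤ := ∑ β ∈ R.pos, R.pairing α β

/-- The affine reflection `r_b` (for `b = (γ, ν) ∈ Φ_af`) applied to an affine root `c = (α, k)`:
`r_b (α, k) = (s_γ α, k − ν ⟨γ∨, α⟩)`. -/
def afRefl (b c : V × ℤ) : V × ℤ := (R.s b.1 c.1, c.2 - b.2 * R.pairing b.1 c.1)

/-- Positivity of an affine root `(α, n)`: either `α ∈ Φ⁺` and `n ≥ 0`, or `α ∈ Φ⁻` and `n ≥ 1`. -/
def AfPos (c : V × ℤ) : Prop := (c.1 ∈ R.pos ∧ 0 ≤ c.2) ∨ (-c.1 ∈ R.pos ∧ 1 ≤ c.2)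

/-- The affine reflection `r_b = s_γ t^{ν γ∨}` (for `b = (γ, ν)`), as an element of the
affine Weyl group realized as pairs `(w, μ) ∈ W × (coweights)` representing `w t^μ`. -/
def rE (b : V × ℤ) : (V ≃ₗ[ℝ] V) × Module.Dual ℝ V := (R.s b.1, (b.2 : ℝ) • R.coroot b.1)

end RootSystemData

/-- Multiplication in the affine Weyl group `W̃ = W ⋉ Λ`, where `(w, μ)` represents `w t^μ`:
`(w t^μ)(w' t^{μ'}) = (w w') t^{w'⁻¹ μ + μ'}`, and the contragredient action on coweights is
`w'⁻¹ • μ = μ ∘ w'`. -/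
def amul (x y : (V ≃ₗ[ℝ] V) × Module.Dual ℝ V) : (V ≃ₗ[ℝ] V) × Module.Dual ℝ V :=
  (x.1 * y.1, x.2 ∘ₗ y.1.toLinearMap + y.2)

/-- The ordered product `x₁ x₂ ⋯ x_k` in the affine Weyl group. -/
def aprod (l : List ((V ≃ₗ[ℝ] V) × Module.Dual ℝ V)) : (V ≃ₗ[ℝ] V) × Module.Dual ℝ V :=
  l.foldr amul (1, 0)

namespace RootSystemData

variable (R : RootSystemData V)

/-- Given affine roots `b 0, …, b (K-1)`, this is `r_{b_{K-1}} ⋯ r_{b_{h+1}} r_{b_h} (b h)`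
(apply the reflections with indices `≥ h` in ascending order of application). -/
def twist {K : ℕ} (b : Fin K → V × ℤ) (h : Fin K) : V × ℤ :=
  (((List.finRange K).filter fun j => h ≤ j).foldl (fun c j => R.afRefl (b j) c) (b h))

/-- Given affine roots `b 0, …, b (K-1)`, this is `r_{b_{K-1}} ⋯ r_{b_{h+1}} (b h)`
(apply the reflections with indices `> h` in ascending order of application). -/
def twistStrict {K : ℕ} (b : Fin K → V × ℤ) (h : Fin K) : V × ℤ :=
  (((List.finRange K).filter fun j => h < j).foldl (fun c j => R.afRefl (b j) c) (b h))

end RootSystemData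

/-- A reflection order on `Φ⁺`, given by an enumeration `β 0 ≺ β 1 ≺ ⋯ ≺ β (N-1)` of the
positive roots such that whenever `β i + β j = β k` one has `i < k < j` or `j < k < i`. -/
structure ReflectionOrder (R : RootSystemData V) (N : ℕ) where
  β : Fin N → V
  inj : Function.Injective β
  range_eq : Set.range β = (R.pos : Set V)
  order3 : ∀ i j k : Fin N, β i + β j = β k → (i < k ∧ k < j) ∨ (j < k ∧ k < i)

/-- An increasing labelled path in the double Bruhat graph `DBG(W)` from `u` to `v`:
a sequence of edges `u = u₁ → u₂ → ⋯ → u_{ℓ+1} = v`, whose labels are positive roots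
`lab (ix 1), …, lab (ix ℓ)` with `ix` strictly monotone (so the path is increasing for the
order given by the enumeration `lab`) and all indices lying in the allowed set `S`;
the edge from `u_i` carries an integer `m i ≥ 0`, with `m i ≥ 1` if `u_i (α_i) ∈ Φ⁻`. -/
structure IncPath (R : RootSystemData V) {N : ℕ} (lab : Fin N → V) (S : Set (Fin N))
    (u v : V ≃ₗ[ℝ] V) where
  len : ℕ
  ix : Fin len → Fin N
  mono : StrictMono ix
  mem_S : ∀ i, ix i ∈ S
  m : Fin len → ℤ
  vert : Fin (len + 1) → V ≃ₗ[ℝ] V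
  vert_zero : vert 0 = u
  vert_last : vert (Fin.last len) = v
  lab_mem : ∀ i : Fin len, lab (ix i) ∈ R.pos
  step : ∀ i : Fin len, vert i.succ = vert i.castSucc * R.s (lab (ix i))
  m_lb : ∀ i : Fin len, (if vert i.castSucc (lab (ix i)) ∈ R.pos then (0 : ℤ) else 1) ≤ m i

/-- The weight `wt(p) = m₁ α₁∨ + ⋯ + m_ℓ α_ℓ∨` of a path, as a coweight. -/
def IncPath.wt {R : RootSystemData V} {N : ℕ} {lab : Fin N → V} {S : Set (Fin N)}
    {u v : V ≃ₗ[ℝ] V} (p : IncPath R lab S u v) : Module.Dual ℝ V :=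
  ∑ i : Fin p.len, (p.m i : ℝ) • R.coroot (lab (p.ix i))

/-- A path in the quantum Bruhat graph `QBG(W)` from `u` to `v`: every edge is either an
edge `w →^{(α,0)} w s_α` with `ℓ(w s_α) = ℓ(w) + 1`, or an edge `w →^{(α,1)} w s_α` with
`ℓ(w s_α) = ℓ(w) + 1 − ⟨α∨, 2ρ⟩`. -/
structure QPath (R : RootSystemData V) (u v : V ≃ₗ[ℝ] V) where
  len : ℕ
  lab : Fin len → V
  lab_mem : ∀ i, lab i ∈ R.pos
  m : Fin len → ℤ
  vert : Fin (len + 1) → V ≃ₗ[ℝ] V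
  vert_zero : vert 0 = u
  vert_last : vert (Fin.last len) = v
  step : ∀ i : Fin len, vert i.succ = vert i.castSucc * R.s (lab i)
  edge : ∀ i : Fin len,
    (m i = 0 ∧ R.len (vert i.succ) = R.len (vert i.castSucc) + 1) ∨
    (m i = 1 ∧ (R.len (vert i.succ) : ℤ) = (R.len (vert i.castSucc) : ℤ) + 1 - R.pairSum (lab i))

/-- The weight of a path in the quantum Bruhat graph. -/
def QPath.wt {R : RootSystemData V} {u v : V ≃ₗ[ℝ] V} (q : QPath R u v) : Module.Dual ℝ V :=
  ∑ i : Fin q.len, (q.m i : ℝ) • R.coroot (q.lab i)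

/-- A simple root: a positive root that is not the sum of two positive roots. -/
def IsSimpleRoot (R : RootSystemData V) (α : V) : Prop :=
  α ∈ R.pos ∧ ¬ ∃ β ∈ R.pos, ∃ γ ∈ R.pos, α = β + γ

/-- `l` is a reduced word for `w`: a list of simple roots whose reflections multiply to `w`,
of length `ℓ(w)`. -/
def IsReducedWord (R : RootSystemData V) (l : List V) (w : V ≃ₗ[ℝ] V) : Prop :=
  (∀ a ∈ l, IsSimpleRoot R a) ∧ (l.map R.s).prod = w ∧ l.length = R.len w

/-- Bruhat order: `x ≤ y` iff some reduced word for `y` contains a subword which is a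
reduced word for `x`. -/
def BruhatLE (R : RootSystemData V) (x y : V ≃ₗ[ℝ] V) : Prop :=
  ∃ ly : List V, IsReducedWord R ly y ∧ ∃ lx : List V, lx.Sublist ly ∧ IsReducedWord R lx x

/-- An admissible type for `(x, u, ≺)`, bounded by `n`: indices `n₁ < ⋯ < n_K ≤ n` and
integers `ν₁, …, ν_K` such that, with `b_h = (u β_{n_h}, ν_h)`, each
`r_{b_K} ⋯ r_{b_{h+1}} (b_h)` is a negative affine root and `r_{b₁} ⋯ r_{b_K} = x` in `W̃`. -/
structure AdmissibleType (R : RootSystemData V) {N : ℕ} (RO : ReflectionOrder R N) (n : ℕ)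
    (u : V ≃ₗ[ℝ] V) (x : (V ≃ₗ[ℝ] V) × Module.Dual ℝ V) where
  K : ℕ
  idx : Fin K → Fin N
  mono : StrictMono idx
  bounded : ∀ h, (idx h : ℕ) < n
  ν : Fin K → ℤ
  neg_cond : ∀ h : Fin K, ¬ R.AfPos (R.twistStrict (fun j => (u (RO.β (idx j)), ν j)) h)
  prod_eq : aprod (List.ofFn fun h : Fin K => R.rE (u (RO.β (idx h)), ν h)) = x


/-!
Let `N_α` be the set of positive roots made negative by `s_α`, and `a` the number of those made
negative by `w`. Off `N_α`, `s_α` permutes the positive roots, and on `N_α` the involution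
`β ↦ -s_α β` exchanges the roots made negative by `w s_α` with those made positive by `w`; hence
`ℓ(w) - ℓ(w s_α) = 2a - |N_α|`. In `⟨α∨, 2ρ⟩ = ∑_{β ∈ Φ⁺} ⟨α∨, β⟩` the terms off `N_α` cancel in
pairs, `⟨α∨, β⟩ ≥ 1` on `N_α` and `⟨α∨, α⟩ = 2`, so `⟨α∨, 2ρ⟩ ≥ |N_α| + 1 ≥ ℓ(w) - ℓ(w s_α) + 1`.
If `wα > 0`, then `w (-s_α β) = ⟨α∨, β⟩ wα - wβ` is positive whenever `wβ < 0`, so `β ↦ -s_α β`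
injects the `a` roots of `N_α` made negative by `w` into those other than `α` made positive, and
`ℓ(w s_α) > ℓ(w)`. Comparing `m ⟨α∨, 2ρ⟩` with these two bounds for `m = 0`, `m = 1`, `m ≥ 2`
gives the inequality and its equality cases.

The positivity statements rest on a `W`-invariant inner product, obtained by averaging over the
finite group `W`: it makes root strings unbroken, and `(·, 2ρ)` is positive on `Φ⁺`.
-/

open scoped Finset Pointwise

theorem Finset.sum_comp_of_involution {ι M : Type*} [AddCommMonoid M] {s : Finset ι}
    {f : ι → ι} (hf : ∀ x ∈ s, f x ∈ s) (hff : ∀ x ∈ s, f (f x) = x) (g : ι → M) :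
    ∑ x ∈ s, g (f x) = ∑ x ∈ s, g x :=
  Finset.sum_nbij' f f hf hf hff hff fun _ _ => rfl

theorem Finset.card_filter_comp_of_involution {ι : Type*} {s : Finset ι} {f : ι → ι}
    (hf : ∀ x ∈ s, f x ∈ s) (hff : ∀ x ∈ s, f (f x) = x) (p : ι → Prop) [DecidablePred p]
    [DecidablePred fun x => p (f x)] :
    #(s.filter fun x => p (f x)) = #(s.filter p) := by
  refine Finset.card_nbij' f f (fun x hx => ?_) (fun x hx => ?_) (fun x hx => ?_) (fun x hx => ?_)
  all_goals simp only [Finset.coe_filter, Set.mem_ofPred_eq] at hx ⊢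
  · exact ⟨hf x hx.1, hx.2⟩
  · exact ⟨hf x hx.1, (hff x hx.1).symm ▸ hx.2⟩
  · exact hff x hx.1
  · exact hff x hx.1

theorem LinearMap.BilinForm.exists_symm_posDef {E : Type*} [AddCommGroup E] [Module ℝ E]
    [FiniteDimensional ℝ E] :
    ∃ B : LinearMap.BilinForm ℝ E, (∀ x y, B x y = B y x) ∧ ∀ x, x ≠ 0 → 0 < B x x := by
  let b := Module.finBasis ℝ E
  refine ⟨∑ i, (LinearMap.mul ℝ ℝ).compl₁₂ (b.coord i) (b.coord i), fun x y => ?_, fun x hx => ?_⟩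
  · simp [mul_comm]
  · obtain ⟨i, hi⟩ := not_forall.mp (mt b.forall_coord_eq_zero_iff.mp hx)
    simpa using Finset.sum_pos' (fun j _ => mul_self_nonneg (b.coord j x))
      ⟨i, Finset.mem_univ i, mul_self_pos.mpr hi⟩

namespace RootSystemData

variable (R : RootSystemData V) {α β : V}

section

omit [DecidableEq V]

lemma s_s (hα : α ∈ R.Φ) (v : V) : R.s α (R.s α v) = v := by
  rw [R.s_apply α hα v, R.s_apply α hα, map_sub, map_smul, R.coroot_self α hα, smul_eq_mul]
  module

lemma s_self (hα : α ∈ R.Φ) : R.s α α = -α := by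
  rw [R.s_apply α hα α, R.coroot_self α hα]
  module

lemma pairing_self (hα : α ∈ R.Φ) : R.pairing α α = 2 := by
  exact_mod_cast (R.pairing_eq α hα α hα).trans (R.coroot_self α hα)

lemma pairing_s (hα : α ∈ R.Φ) (hβ : β ∈ R.Φ) :
    R.pairing α (R.s α β) = -R.pairing α β := by
  have h := R.pairing_eq α hα _ (R.s_root_mem α hα β hβ)
  have hs : R.coroot α (R.s α β) = -R.coroot α β := by
    rw [R.s_apply α hα, map_sub, map_smul, R.coroot_self α hα, smul_eq_mul]
    ring
  rw [hs, ← R.pairing_eq α hα β hβ] at h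
  exact_mod_cast h

lemma neg_s_neg_s (hα : α ∈ R.Φ) (β : V) : -R.s α (-R.s α β) = β := by
  rw [map_neg, R.s_s hα, neg_neg]

lemma s_mem_Wgrp (hα : α ∈ R.Φ) : R.s α ∈ R.Wgrp :=
  Subgroup.subset_closure ⟨α, hα, rfl⟩

lemma Wgrp_le_stabilizer : R.Wgrp ≤ MulAction.stabilizer (V ≃ₗ[ℝ] V) (R.Φ : Set V) := by
  refine Subgroup.closure_le _ |>.mpr ?_
  rintro _ ⟨α, hα, rfl⟩
  rw [SetLike.mem_coe, MulAction.mem_stabilizer_iff]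
  ext v
  rw [Set.mem_smul_set]
  refine ⟨?_, fun hv => ⟨R.s α v, R.s_root_mem α hα v hv, R.s_s hα v⟩⟩
  rintro ⟨u, hu, rfl⟩
  exact R.s_root_mem α hα u hu

lemma apply_mem_of_mem_Wgrp {w : V ≃ₗ[ℝ] V} (hw : w ∈ R.Wgrp) {v : V} (hv : v ∈ R.Φ) :
    w v ∈ R.Φ := by
  rw [← SetLike.mem_coe, ← MulAction.mem_stabilizer_iff.mp (R.Wgrp_le_stabilizer hw)]
  exact Set.smul_mem_smul_set hv

instance finite_Wgrp : Finite R.Wgrp := by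
  refine Finite.of_injective
    (fun (g : R.Wgrp) (v : R.Φ) => (⟨g.1 v, R.apply_mem_of_mem_Wgrp g.2 v.2⟩ : R.Φ)) ?_
  intro g h hgh
  have hΦ : ∀ v ∈ (R.Φ : Set V), g.1 v = h.1 v :=
    fun v hv => congrArg Subtype.val (congrFun hgh ⟨v, hv⟩)
  exact Subtype.ext (LinearEquiv.toLinearMap_injective (LinearMap.ext_on R.span_eq hΦ))

instance : Fintype R.Wgrp := Fintype.ofFinite _

lemma finiteDimensional (R : RootSystemData V) : FiniteDimensional ℝ V :=
  ⟨R.span_eq ▸ Submodule.fg_span R.Φ.finite_toSet⟩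

def baseForm : LinearMap.BilinForm ℝ V :=
  haveI := R.finiteDimensional
  Classical.choose LinearMap.BilinForm.exists_symm_posDef

lemma baseForm_spec :
    (∀ x y, R.baseForm x y = R.baseForm y x) ∧ ∀ x, x ≠ 0 → 0 < R.baseForm x x :=
  haveI := R.finiteDimensional
  Classical.choose_spec LinearMap.BilinForm.exists_symm_posDef

def form : LinearMap.BilinForm ℝ V :=
  ∑ g : R.Wgrp, R.baseForm.compl₁₂ g.1.toLinearMap g.1.toLinearMap

lemma form_apply (x y : V) : R.form x y = ∑ g : R.Wgrp, R.baseForm (g.1 x) (g.1 y) := by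
  simp [form]

lemma form_comm (x y : V) : R.form x y = R.form y x := by
  simp only [form_apply]
  exact Finset.sum_congr rfl fun g _ => R.baseForm_spec.1 _ _

lemma form_self_pos {x : V} (hx : x ≠ 0) : 0 < R.form x x := by
  rw [form_apply]
  exact Finset.sum_pos (fun g _ => R.baseForm_spec.2 _ (g.1.map_ne_zero_iff.mpr hx))
    Finset.univ_nonempty

lemma form_s_s (hα : α ∈ R.Φ) (x y : V) : R.form (R.s α x) (R.s α y) = R.form x y := by
  simp only [form_apply]
  exact Fintype.sum_equiv (Equiv.mulRight ⟨R.s α, R.s_mem_Wgrp hα⟩) _ _ fun g => rfl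

lemma coroot_mul_form_self (hα : α ∈ R.Φ) (v : V) :
    R.coroot α v * R.form α α = 2 * R.form α v := by
  have h := R.form_s_s hα α v
  simp only [R.s_self hα, R.s_apply α hα v, map_neg, map_sub, map_smul, LinearMap.neg_apply,
    smul_eq_mul] at h
  linarith

lemma pairing_mul_form_self (hα : α ∈ R.Φ) (hβ : β ∈ R.Φ) :
    (R.pairing α β : ℝ) * R.form α α = 2 * R.form α β := by
  rw [R.pairing_eq α hα β hβ]
  exact R.coroot_mul_form_self hα β

lemma add_mem_or_eq_neg_of_form_neg (hα : α ∈ R.Φ) (hβ : β ∈ R.Φ) (h : R.form α β < 0) :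
    α + β ∈ R.Φ ∨ β = -α := by
  have hαα := R.form_self_pos (R.ne_zero α hα)
  have hββ := R.form_self_pos (R.ne_zero β hβ)
  have ha := R.pairing_mul_form_self hα hβ
  have hb := R.pairing_mul_form_self hβ hα
  rw [R.form_comm β α] at hb
  have ha_neg : R.pairing α β < 0 := by
    have : (R.pairing α β : ℝ) < 0 := by nlinarith
    exact_mod_cast this
  have hb_neg : R.pairing β α < 0 := by
    have : (R.pairing β α : ℝ) < 0 := by nlinarith
    exact_mod_cast this
  by_cases ha1 : R.pairing α β = -1
  · left
    have hs : R.s α β = α + β := by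
      rw [R.s_apply α hα β, ← R.pairing_eq α hα β hβ, ha1]
      module
    exact hs ▸ R.s_root_mem α hα β hβ
  by_cases hb1 : R.pairing β α = -1
  · left
    have hs : R.s β α = α + β := by
      rw [R.s_apply β hβ α, ← R.pairing_eq β hβ α hα, hb1]
      module
    exact hs ▸ R.s_root_mem β hβ α hα
  -- now `(α + β, α + β) = (1 + ⟨α∨, β⟩ / 2) (α, α) + (1 + ⟨β∨, α⟩ / 2) (β, β) ≤ 0`
  right
  have ha2 : (R.pairing α β : ℝ) ≤ -2 := by exact_mod_cast (by omega : R.pairing α β ≤ -2)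
  have hb2 : (R.pairing β α : ℝ) ≤ -2 := by exact_mod_cast (by omega : R.pairing β α ≤ -2)
  have hsum : R.form (α + β) (α + β) ≤ 0 := by
    simp only [map_add, LinearMap.add_apply, R.form_comm β α]
    nlinarith
  have hzero : α + β = 0 := by
    by_contra hne
    exact (R.form_self_pos hne).not_ge hsum
  exact eq_neg_of_add_eq_zero_right hzero

lemma add_smul_mem_pos (hα : α ∈ R.pos) (hβ : β ∈ R.pos) {K : ℕ} (hK : R.coroot α β = -K) :
    ∀ j ≤ K, β + (j : ℝ) • α ∈ R.pos := by
  have hαΦ := R.pos_subset hα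
  have hcoroot (j : ℕ) : R.coroot α (β + (j : ℝ) • α) = 2 * j - K := by
    rw [map_add, map_smul, hK, R.coroot_self α hαΦ, smul_eq_mul]
    ring
  intro j
  induction j using Nat.strong_induction_on with
  | _ j ih =>
  intro hj
  rcases j with _ | j
  · simpa using hβ
  have hγ : β + (j : ℝ) • α ∈ R.pos := ih j (by omega) (by omega)
  have hγα : β + (j : ℝ) • α + α = β + ((j + 1 : ℕ) : ℝ) • α := by
    push_cast
    module
  rw [← hγα]
  refine R.pos_add_mem _ hγ α hα ?_
  rw [hγα]
  -- on the first half of the string `(α, β + jα) < 0`; the second half mirrors it under `s_α`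
  by_cases hjK : 2 * j < K
  · have hneg : R.form α (β + (j : ℝ) • α) < 0 := by
      have h := R.coroot_mul_form_self hαΦ (β + (j : ℝ) • α)
      have hjK' : (2 * j : ℝ) < K := by exact_mod_cast hjK
      rw [hcoroot] at h
      nlinarith [R.form_self_pos (R.ne_zero α hαΦ)]
    rcases R.add_mem_or_eq_neg_of_form_neg hαΦ (R.pos_subset hγ) hneg with h | h
    · rwa [add_comm, hγα] at h
    · exact absurd (h ▸ hγ) (R.pos_not_neg α hα)
  · have hi := ih (K - (j + 1)) (by omega) (by omega)
    have hs : R.s α (β + ((K - (j + 1) : ℕ) : ℝ) • α) = β + ((j + 1 : ℕ) : ℝ) • α := by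
      rw [R.s_apply α hαΦ, hcoroot, Nat.cast_sub (by omega : j + 1 ≤ K)]
      push_cast
      module
    exact hs ▸ R.s_root_mem α hαΦ _ (R.pos_subset hi)

lemma s_mem_pos_of_pairing_nonpos (hα : α ∈ R.pos) (hβ : β ∈ R.pos)
    (h : R.pairing α β ≤ 0) : R.s α β ∈ R.pos := by
  set K := (-R.pairing α β).toNat
  have hK : R.coroot α β = -K := by
    rw [← R.pairing_eq α (R.pos_subset hα) β (R.pos_subset hβ)]
    have : (K : ℤ) = -R.pairing α β := Int.toNat_of_nonneg (by omega)
    rw [← Int.cast_natCast, this]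
    push_cast
    ring
  rw [R.s_apply α (R.pos_subset hα), hK, neg_smul, sub_neg_eq_add]
  exact R.add_smul_mem_pos hα hβ hK K le_rfl

end

def inversionSet (α : V) : Finset V := R.pos.filter fun β => R.s α β ∉ R.pos

lemma inversionSet_subset_Φ : R.inversionSet α ⊆ R.Φ :=
  (Finset.filter_subset _ _).trans R.pos_subset

lemma one_le_pairing_of_mem_inversionSet (hα : α ∈ R.pos) (hβ : β ∈ R.inversionSet α) :
    1 ≤ R.pairing α β := by
  rw [inversionSet, Finset.mem_filter] at hβ
  by_contra h
  exact hβ.2 (R.s_mem_pos_of_pairing_nonpos hα hβ.1 (by omega))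

lemma self_mem_inversionSet (hα : α ∈ R.pos) : α ∈ R.inversionSet α := by
  rw [inversionSet, Finset.mem_filter, R.s_self (R.pos_subset hα)]
  exact ⟨hα, R.pos_not_neg α hα⟩

lemma neg_s_mem_inversionSet (hα : α ∈ R.Φ) (hβ : β ∈ R.inversionSet α) :
    -R.s α β ∈ R.inversionSet α := by
  rw [inversionSet, Finset.mem_filter] at hβ ⊢
  refine ⟨(R.mem_pos_or _ (R.s_root_mem α hα β (R.pos_subset hβ.1))).resolve_left hβ.2, ?_⟩
  rw [map_neg, R.s_s hα]
  exact R.pos_not_neg β hβ.1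

lemma s_mem_filter_s_mem_pos (hα : α ∈ R.Φ)
    (hβ : β ∈ R.pos.filter fun β => R.s α β ∈ R.pos) :
    R.s α β ∈ R.pos.filter fun β => R.s α β ∈ R.pos := by
  rw [Finset.mem_filter] at hβ ⊢
  exact ⟨hβ.2, (R.s_s hα β).symm ▸ hβ.1⟩

lemma pairSum_eq_sum_inversionSet (hα : α ∈ R.Φ) :
    R.pairSum α = ∑ β ∈ R.inversionSet α, R.pairing α β := by
  have hC : ∑ β ∈ R.pos.filter (fun β => R.s α β ∈ R.pos), R.pairing α β = 0 := by
    have h := Finset.sum_comp_of_involution (fun _ => R.s_mem_filter_s_mem_pos hα)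
      (fun β _ => R.s_s hα β) (R.pairing α)
    rw [Finset.sum_congr rfl fun β hβ =>
      R.pairing_s hα (R.pos_subset (Finset.mem_filter.mp hβ).1), Finset.sum_neg_distrib] at h
    omega
  rw [pairSum, ← Finset.sum_filter_not_add_sum_filter R.pos (fun β => R.s α β ∈ R.pos), hC,
    add_zero]
  rfl

lemma card_inversionSet_add_one_le_pairSum (hα : α ∈ R.pos) :
    (#(R.inversionSet α) : ℤ) + 1 ≤ R.pairSum α := by
  have h := Finset.single_le_sum (f := fun β => R.pairing α β - 1)
    (fun β hβ => sub_nonneg.mpr (R.one_le_pairing_of_mem_inversionSet hα hβ))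
    (R.self_mem_inversionSet hα)
  rw [Finset.sum_sub_distrib, ← R.pairSum_eq_sum_inversionSet (R.pos_subset hα),
    R.pairing_self (R.pos_subset hα)] at h
  simp only [Finset.sum_const, Int.nsmul_eq_mul, mul_one] at h
  omega

lemma pairSum_pos (hα : α ∈ R.pos) : 0 < R.pairSum α := by
  have := R.card_inversionSet_add_one_le_pairSum hα
  omega

def twoRho : V := ∑ δ ∈ R.pos, δ

lemma form_twoRho_pos (hα : α ∈ R.pos) : 0 < R.form α R.twoRho := by
  have hαΦ := R.pos_subset hα
  have h : R.form α R.twoRho = R.pairSum α * (R.form α α / 2) := by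
    rw [twoRho, map_sum, pairSum, Int.cast_sum, Finset.sum_mul]
    refine Finset.sum_congr rfl fun δ hδ => ?_
    linarith [R.pairing_mul_form_self hαΦ (R.pos_subset hδ)]
  rw [h]
  have := R.form_self_pos (R.ne_zero α hαΦ)
  have : (0 : ℝ) < R.pairSum α := by exact_mod_cast R.pairSum_pos hα
  positivity

lemma mem_pos_of_form_twoRho_pos {v : V} (hv : v ∈ R.Φ) (h : 0 < R.form v R.twoRho) :
    v ∈ R.pos := by
  refine (R.mem_pos_or v hv).resolve_right fun hv' => ?_
  have := R.form_twoRho_pos hv'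
  simp only [map_neg, LinearMap.neg_apply] at this
  linarith

variable {w : V ≃ₗ[ℝ] V}

lemma card_filter_pos_add_card_filter_neg_pos (hw : w ∈ R.Wgrp) {s : Finset V} (hs : s ⊆ R.Φ) :
    #(s.filter fun β => w β ∈ R.pos) + #(s.filter fun β => -w β ∈ R.pos) = #s := by
  have hpos : s.filter (fun β => w β ∈ R.pos) = s.filter (fun β => -w β ∉ R.pos) :=
    Finset.filter_congr fun β hβ => ⟨fun h h' => R.pos_not_neg _ h h',
      (R.mem_pos_or _ (R.apply_mem_of_mem_Wgrp hw (hs hβ))).resolve_right⟩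
  rw [hpos, add_comm]
  exact Finset.card_filter_add_card_filter_not _

lemma len_sub_len_mul_s (hw : w ∈ R.Wgrp) (hα : α ∈ R.Φ) :
    (R.len w : ℤ) - R.len (w * R.s α) =
      2 * #((R.inversionSet α).filter fun β => -w β ∈ R.pos) - #(R.inversionSet α) := by
  have hsplit (u : V ≃ₗ[ℝ] V) : R.len u =
      #((R.inversionSet α).filter fun β => -u β ∈ R.pos)
        + #((R.pos.filter fun β => R.s α β ∈ R.pos).filter fun β => -u β ∈ R.pos) := by
    rw [len, inversionSet, Finset.filter_comm, Finset.filter_comm (p := fun β => R.s α β ∈ R.pos),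
      ← Finset.card_filter_add_card_filter_not (fun β => R.s α β ∉ R.pos)]
    simp only [not_not]
  have hC : #((R.pos.filter fun β => R.s α β ∈ R.pos).filter fun β => -(w * R.s α) β ∈ R.pos)
      = #((R.pos.filter fun β => R.s α β ∈ R.pos).filter fun β => -w β ∈ R.pos) :=
    Finset.card_filter_comp_of_involution (fun _ => R.s_mem_filter_s_mem_pos hα)
      (fun β _ => R.s_s hα β) fun β => -w β ∈ R.pos
  have hN : #((R.inversionSet α).filter fun β => -(w * R.s α) β ∈ R.pos)
      = #((R.inversionSet α).filter fun β => w β ∈ R.pos) := by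
    refine Eq.trans ?_ (Finset.card_filter_comp_of_involution
      (fun _ => R.neg_s_mem_inversionSet hα) (fun β _ => R.neg_s_neg_s hα β) _)
    congr 1
    exact Finset.filter_congr fun β _ => by rw [map_neg, LinearEquiv.mul_apply]
  have hpm := R.card_filter_pos_add_card_filter_neg_pos hw (s := R.inversionSet α)
    R.inversionSet_subset_Φ
  rw [hsplit w, hsplit (w * R.s α), hC, hN]
  omega

lemma apply_neg_s_mem_pos (hw : w ∈ R.Wgrp) (hα : α ∈ R.pos) (hwα : w α ∈ R.pos)
    (hβ : β ∈ R.inversionSet α) (hwβ : -w β ∈ R.pos) : w (-R.s α β) ∈ R.pos := by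
  have hαΦ := R.pos_subset hα
  refine R.mem_pos_of_form_twoRho_pos (R.apply_mem_of_mem_Wgrp hw
    (R.inversionSet_subset_Φ (R.neg_s_mem_inversionSet hαΦ hβ))) ?_
  have hc : (1 : ℝ) ≤ R.coroot α β := by
    rw [← R.pairing_eq α hαΦ β (R.inversionSet_subset_Φ hβ)]
    exact_mod_cast R.one_le_pairing_of_mem_inversionSet hα hβ
  have h1 := R.form_twoRho_pos hwα
  have h2 := R.form_twoRho_pos hwβ
  rw [R.s_apply α hαΦ]
  simp only [map_neg, map_sub, map_smul, LinearMap.neg_apply, LinearMap.sub_apply,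
    LinearMap.smul_apply, smul_eq_mul] at h2 ⊢
  nlinarith

lemma two_mul_card_filter_add_one_le (hw : w ∈ R.Wgrp) (hα : α ∈ R.pos) (hwα : w α ∈ R.pos) :
    2 * #((R.inversionSet α).filter fun β => -w β ∈ R.pos) + 1 ≤ #(R.inversionSet α) := by
  have hαΦ := R.pos_subset hα
  have hα_mem : α ∈ (R.inversionSet α).filter fun β => w β ∈ R.pos :=
    Finset.mem_filter.mpr ⟨R.self_mem_inversionSet hα, hwα⟩
  have hinj : #((R.inversionSet α).filter fun β => -w β ∈ R.pos)
      ≤ #(((R.inversionSet α).filter fun β => w β ∈ R.pos).erase α) := by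
    refine Finset.card_le_card_of_injOn (fun β => -R.s α β) (fun β hβ => ?_)
      (fun β _ γ _ h => ?_)
    · simp only [Finset.coe_filter, Set.mem_ofPred_eq, Finset.coe_erase, Set.mem_sdiff,
        Set.mem_singleton_iff] at hβ ⊢
      refine ⟨⟨R.neg_s_mem_inversionSet hαΦ hβ.1, R.apply_neg_s_mem_pos hw hα hwα hβ.1 hβ.2⟩,
        fun h => ?_⟩
      have hβα : β = α := by rw [← R.neg_s_neg_s hαΦ β, h, R.s_self hαΦ, neg_neg]
      exact R.pos_not_neg _ hwα (hβα ▸ hβ.2)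
    · rw [← R.neg_s_neg_s hαΦ β, ← R.neg_s_neg_s hαΦ γ]
      exact congrArg (fun v => -R.s α v) h
  have hpm := R.card_filter_pos_add_card_filter_neg_pos hw (s := R.inversionSet α)
    R.inversionSet_subset_Φ
  have := Finset.card_erase_of_mem hα_mem
  have := Finset.card_pos.mpr ⟨α, hα_mem⟩
  omega

lemma len_lt_len_mul_s (hw : w ∈ R.Wgrp) (hα : α ∈ R.pos) (hwα : w α ∈ R.pos) :
    R.len w < R.len (w * R.s α) := by
  have := R.len_sub_len_mul_s hw (R.pos_subset hα)
  have := R.two_mul_card_filter_add_one_le hw hα hwα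
  omega

lemma len_add_one_le_len_mul_s_add_pairSum (hw : w ∈ R.Wgrp) (hα : α ∈ R.pos) :
    (R.len w : ℤ) + 1 ≤ R.len (w * R.s α) + R.pairSum α := by
  have := R.len_sub_len_mul_s hw (R.pos_subset hα)
  have := R.card_inversionSet_add_one_le_pairSum hα
  have := Finset.card_filter_le (R.inversionSet α) fun β => -w β ∈ R.pos
  omega

end RootSystemData

/-- for a valid labelled edge `w →^{(α,m)} w s_α` of `DBG(W)` one has
`m ⟨α∨, 2ρ⟩ ≥ ℓ(w) − ℓ(w s_α) + 1`, with equality iff the edge is an edge of `QBG(W)`,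
i.e. iff `m = 0` and `ℓ(w s_α) = ℓ(w) + 1`, or `m = 1` and
`ℓ(w s_α) = ℓ(w) + 1 − ⟨α∨, 2ρ⟩`. -/
theorem statement16 (R : RootSystemData V)
    (w : V ≃ₗ[ℝ] V) (hw : w ∈ R.Wgrp) (α : V) (hα : α ∈ R.pos)
    (m : ℤ) (hm : (if w α ∈ R.pos then (0 : ℤ) else 1) ≤ m) :
    ((R.len w : ℤ) - (R.len (w * R.s α) : ℤ) + 1 ≤ m * R.pairSum α)
    ∧ (m * R.pairSum α = (R.len w : ℤ) - (R.len (w * R.s α) : ℤ) + 1 ↔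
        ((m = 0 ∧ R.len (w * R.s α) = R.len w + 1) ∨
          (m = 1 ∧ (R.len (w * R.s α) : ℤ) = (R.len w : ℤ) + 1 - R.pairSum α))) := by
  have hP := R.pairSum_pos hα
  have hle := R.len_add_one_le_len_mul_s_add_pairSum hw hα
  have hm0 : 0 ≤ m := by split_ifs at hm <;> omega
  have hlower : (R.len w : ℤ) - R.len (w * R.s α) + 1 ≤ m * R.pairSum α := by
    by_cases hwα : w α ∈ R.pos
    · have := R.len_lt_len_mul_s hw hα hwα
      have : 0 ≤ m * R.pairSum α := by positivity
      omega
    · rw [if_neg hwα] at hm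
      nlinarith
  refine ⟨hlower, fun heq => ?_, ?_⟩
  · obtain rfl | rfl | hm2 : m = 0 ∨ m = 1 ∨ 2 ≤ m := by omega
    · exact Or.inl ⟨rfl, by omega⟩
    · exact Or.inr ⟨rfl, by omega⟩
    · nlinarith
  · rintro (⟨rfl, h⟩ | ⟨rfl, h⟩) <;> omega
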